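/- arXiv:1409.1632 — 3 statements merged into one kernel-verified Lean document; each statement's English description precedes it below -/
import Mathlib

section
/- If f is a function holomorphic on the open unit disk in ℂ, continuous on the closed unit disk, and f takes only real values on the boundary circle, then f is constant. -/
/-!
Since `‖exp (c * f)‖ = exp (c * f).re`, the maximum modulus principle for `exp (± I * f)` shows
that `Im f` vanishes on the whole closed disk. A holomorphic function with values in the real
line cannot be an open map, so by the open mapping theorem `f` is constant on the open disk,
hence by continuity on its closure.
-/

open Set Metric Complex Bornology

namespace DiffContOnCl

variable {E : Type*} [NormedAddCommGroup E] [NormedSpace ℂ E] [Nontrivial E]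
  {f : E → ℂ} {U : Set E}

theorem re_le_of_forall_mem_frontier_re_le (hf : DiffContOnCl ℂ f U) (hU : IsBounded U)
    {C : ℝ} (hC : ∀ z ∈ frontier U, (f z).re ≤ C) {z : E} (hz : z ∈ closure U) :
    (f z).re ≤ C := by
  have hexp : DiffContOnCl ℂ (fun w ↦ exp (f w)) U := differentiable_exp.comp_diffContOnCl hf
  have hbound : ∀ w ∈ frontier U, ‖exp (f w)‖ ≤ Real.exp C := fun w hw ↦ by
    rw [norm_exp, Real.exp_le_exp]
    exact hC w hw
  simpa only [norm_exp, Real.exp_le_exp] using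
    norm_le_of_forall_mem_frontier_norm_le hU hexp hbound hz

theorem im_eq_zero_of_forall_mem_frontier_im_eq_zero (hf : DiffContOnCl ℂ f U) (hU : IsBounded U)
    (h : ∀ z ∈ frontier U, (f z).im = 0) {z : E} (hz : z ∈ closure U) : (f z).im = 0 := by
  have hle := (hf.const_smul (-I)).re_le_of_forall_mem_frontier_re_le hU (C := 0)
    (fun w hw ↦ by simp [h w hw]) hz
  have hge := (hf.const_smul I).re_le_of_forall_mem_frontier_re_le hU (C := 0)
    (fun w hw ↦ by simp [h w hw]) hz
  simp only [Pi.smul_apply, smul_eq_mul, neg_mul, neg_re, I_mul_re] at hle hge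
  linarith

end DiffContOnCl

theorem DifferentiableOn.exists_eq_const_of_im_eq_zero {f : ℂ → ℂ} {U : Set ℂ}
    (hf : DifferentiableOn ℂ f U) (hU : IsOpen U) (hU_conn : IsPreconnected U)
    (h : ∀ z ∈ U, (f z).im = 0) : ∃ c, ∀ z ∈ U, f z = c := by
  rcases (hf.analyticOnNhd hU).is_constant_or_isOpen hU_conn with hconst | hopen
  · exact hconst
  rcases U.eq_empty_or_nonempty with rfl | ⟨z, hz⟩
  · exact ⟨0, by simp⟩
  have himage : f '' U ⊆ interior (im ⁻¹' {0}) :=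
    interior_maximal (image_subset_iff.2 h) (hopen U Subset.rfl hU)
  rw [interior_preimage_im, interior_singleton] at himage
  exact absurd (himage (mem_image_of_mem f hz)) (notMem_empty _)

theorem DiffContOnCl.exists_eq_const_of_forall_mem_frontier_im_eq_zero {f : ℂ → ℂ}
    {U : Set ℂ} (hf : DiffContOnCl ℂ f U) (hU : IsBounded U) (hU_open : IsOpen U)
    (hU_conn : IsPreconnected U)
    (h : ∀ z ∈ frontier U, (f z).im = 0) : ∃ c, ∀ z ∈ closure U, f z = c := by
  obtain ⟨c, hc⟩ := hf.differentiableOn.exists_eq_const_of_im_eq_zero hU_open hU_conn fun z hz ↦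
    hf.im_eq_zero_of_forall_mem_frontier_im_eq_zero hU h (subset_closure hz)
  exact ⟨c, EqOn.of_subset_closure hc hf.continuousOn continuousOn_const subset_closure
    Subset.rfl⟩

/-- If `f` is holomorphic on the open unit disk, continuous on the closed unit disk,
and real-valued on the boundary circle, then `f` is constant on the closed disk. -/
theorem holomorphic_real_on_boundary_constant (f : ℂ → ℂ)
    (hcont : ContinuousOn f (Metric.closedBall 0 1))
    (hdiff : DifferentiableOn ℂ f (Metric.ball 0 1))
    (hreal : ∀ z : ℂ, ‖z‖ = 1 → (f z).im = 0) :
    ∃ c : ℂ, ∀ z ∈ Metric.closedBall (0 : ℂ) 1, f z = c := by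
  have hf : DiffContOnCl ℂ f (ball 0 1) := .mk_ball hdiff hcont
  have hfrontier : ∀ z ∈ frontier (ball (0 : ℂ) 1), (f z).im = 0 := fun z hz ↦ by
    rw [frontier_ball 0 one_ne_zero, mem_sphere_zero_iff_norm] at hz
    exact hreal z hz
  simpa only [closure_ball (0 : ℂ) one_ne_zero] using
    hf.exists_eq_const_of_forall_mem_frontier_im_eq_zero isBounded_ball isOpen_ball
      (convex_ball 0 1).isPreconnected hfrontier
end

section
/- Let u : D → Bⁿ ⊂ ℝⁿ be a proper branched minimal immersion of the unit disk into the unit ball meeting the boundary sphere orthogonally (free boundary condition: u_r is parallel to u along ∂D). Then the holomorphic quartic differential z⁴ (u_{zz}·u_{zz}) vanishes identically on D. -/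
open Metric

/-- The Wirtinger derivative `∂_z u = (u_x - i u_y)/2`. -/
noncomputable def wdz {E : Type*} [NormedAddCommGroup E] [NormedSpace ℂ E]
    (u : ℂ → E) (z : ℂ) : E :=
  (1 / 2 : ℂ) • (fderiv ℝ u z 1 - Complex.I • fderiv ℝ u z Complex.I)

/-- The Wirtinger derivative `∂_z̄ u = (u_x + i u_y)/2`. -/
noncomputable def wdzbar {E : Type*} [NormedAddCommGroup E] [NormedSpace ℂ E]
    (u : ℂ → E) (z : ℂ) : E :=
  (1 / 2 : ℂ) • (fderiv ℝ u z 1 + Complex.I • fderiv ℝ u z Complex.I)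

/-- Complexification of an `ℝⁿ`-valued map. -/
def cplx {n : ℕ} (u : ℂ → (Fin n → ℝ)) : ℂ → (Fin n → ℂ) :=
  fun z i => ((u z i : ℝ) : ℂ)

open Complex

section aux

lemma fderiv_apply_eq (w : ℂ → ℂ) (z v : ℂ) (hw : DifferentiableAt ℝ w z) :
    fderiv ℝ w z v = wdz w z * v + wdzbar w z * (starRingEnd ℂ) v := by
  have hv' : (v.re : ℂ) + v.im * I = v := Complex.re_add_im v
  have hD : fderiv ℝ w z v = v.re • fderiv ℝ w z 1 + v.im • fderiv ℝ w z I := by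
    conv_lhs => rw [show v = v.re • (1:ℂ) + v.im • I by
      simp [Complex.real_smul, Complex.re_add_im]]
    rw [map_add, map_smul, map_smul]
  rw [hD]
  have hc : (starRingEnd ℂ) v = (v.re : ℂ) - v.im * I := by
    apply Complex.ext <;> simp
  simp only [wdz, wdzbar, smul_eq_mul, Complex.real_smul, hc]
  linear_combination ((1/2 : ℂ) * (fderiv ℝ w z 1 - I * fderiv ℝ w z I)) * hv' +
    ((v.im : ℂ) * fderiv ℝ w z I) * Complex.I_sq

lemma hasDerivAt_of_wdzbar_eq_zero (w : ℂ → ℂ) (z : ℂ) (hw : DifferentiableAt ℝ w z)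
    (h0 : wdzbar w z = 0) : HasDerivAt w (wdz w z) z := by
  have H : (ContinuousLinearMap.smulRight (1 : ℂ →L[ℂ] ℂ) (wdz w z)).restrictScalars ℝ
      = fderiv ℝ w z := by
    apply ContinuousLinearMap.ext
    intro v
    rw [fderiv_apply_eq w z v hw, h0]
    simp [mul_comm]
  exact hasDerivAt_iff_hasFDerivAt.2 (hasFDerivAt_of_restrictScalars ℝ hw.hasFDerivAt H)

lemma wdz_eq_deriv_of_hasDerivAt (w : ℂ → ℂ) (z c : ℂ) (h : HasDerivAt w c z) :
    wdz w z = c := by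
  have h2 : HasFDerivAt w
      ((ContinuousLinearMap.smulRight (1 : ℂ →L[ℂ] ℂ) c).restrictScalars ℝ) z :=
    (hasDerivAt_iff_hasFDerivAt.1 h).restrictScalars ℝ
  have e1 : fderiv ℝ w z 1 = c := by rw [h2.fderiv]; simp
  have e2 : fderiv ℝ w z I = I * c := by rw [h2.fderiv]; simp [smul_eq_mul]
  simp only [wdz, e1, e2, smul_eq_mul]
  linear_combination (-(1/2 : ℂ) * c) * Complex.I_sq

lemma wdz_proj {n : ℕ} (w : ℂ → (Fin n → ℂ)) (z : ℂ) (i : Fin n)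
    (hw : DifferentiableAt ℝ w z) :
    wdz (fun y => w y i) z = wdz w z i := by
  have h1 : fderiv ℝ (fun y => w y i) z =
      (ContinuousLinearMap.proj (R := ℝ) (φ := fun _ : Fin n => ℂ) i).comp (fderiv ℝ w z) :=
    ((ContinuousLinearMap.proj (R := ℝ) (φ := fun _ : Fin n => ℂ) i).hasFDerivAt.comp z
      hw.hasFDerivAt).fderiv
  simp [wdz, h1]

lemma wdzbar_proj {n : ℕ} (w : ℂ → (Fin n → ℂ)) (z : ℂ) (i : Fin n)
    (hw : DifferentiableAt ℝ w z) :
    wdzbar (fun y => w y i) z = wdzbar w z i := by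
  have h1 : fderiv ℝ (fun y => w y i) z =
      (ContinuousLinearMap.proj (R := ℝ) (φ := fun _ : Fin n => ℂ) i).comp (fderiv ℝ w z) :=
    ((ContinuousLinearMap.proj (R := ℝ) (φ := fun _ : Fin n => ℂ) i).hasFDerivAt.comp z
      hw.hasFDerivAt).fderiv
  simp [wdzbar, h1]

lemma fderiv_ofReal_comp (uu : ℂ → ℝ) (z v : ℂ) (h : DifferentiableAt ℝ uu z) :
    fderiv ℝ (fun y => ((uu y : ℝ) : ℂ)) z v = ((fderiv ℝ uu z v : ℝ) : ℂ) := by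
  have h1 : fderiv ℝ (fun y => ((uu y : ℝ) : ℂ)) z = Complex.ofRealCLM.comp (fderiv ℝ uu z) :=
    (Complex.ofRealCLM.hasFDerivAt.comp z h.hasFDerivAt).fderiv
  simp [h1]

lemma wdzbar_eq_conj_wdz (uu : ℂ → ℝ) (z : ℂ) (h : DifferentiableAt ℝ uu z) :
    wdzbar (fun y => ((uu y : ℝ) : ℂ)) z
      = (starRingEnd ℂ) (wdz (fun y => ((uu y : ℝ) : ℂ)) z) := by
  simp only [wdz, wdzbar, fderiv_ofReal_comp uu z 1 h, fderiv_ofReal_comp uu z I h,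
    smul_eq_mul, map_mul, map_sub, map_add, Complex.conj_ofReal, Complex.conj_I,
    map_div₀, map_one, map_ofNat]
  push_cast
  ring

lemma HasDerivAt.conj_comp {F : ℝ → ℂ} {F' : ℂ} {θ : ℝ} (h : HasDerivAt F F' θ) :
    HasDerivAt (fun t => (starRingEnd ℂ) (F t)) ((starRingEnd ℂ) F') θ := by
  have := Complex.conjCLE.toContinuousLinearMap.hasFDerivAt.comp_hasDerivAt θ h
  exact this

lemma hasDerivAt_circle (θ : ℝ) :
    HasDerivAt (fun t : ℝ => Complex.exp ((t : ℂ) * I)) (I * Complex.exp ((θ : ℂ) * I)) θ := by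
  have h1 : HasDerivAt (fun t : ℝ => ((t : ℂ) * I)) I θ := by
    simpa using (Complex.ofRealCLM.hasDerivAt (x := θ)).mul_const I
  simpa [mul_comm] using h1.cexp

end aux

open Complex in
lemma boundary_real {n : ℕ} (U : Set ℂ) (hsphereU : ∀ z : ℂ, ‖z‖ = 1 → z ∈ U)
    (F g h : Fin n → ℂ → ℂ)
    (hFd : ∀ i, ∀ z ∈ U, DifferentiableAt ℝ (F i) z)
    (hFreal : ∀ i z, (starRingEnd ℂ) (F i z) = F i z)
    (hwdzF : ∀ i, ∀ z ∈ U, wdz (F i) z = g i z)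
    (hwdzbarF : ∀ i, ∀ z ∈ U, wdzbar (F i) z = (starRingEnd ℂ) (g i z))
    (hghol : ∀ i, ∀ z ∈ U, HasDerivAt (g i) (h i z) z)
    (hconfg : ∀ z ∈ U, ∑ i, g i z * g i z = 0)
    (hconf2 : ∀ z ∈ U, ∑ i, g i z * h i z = 0)
    (hprop : ∀ z : ℂ, ‖z‖ = 1 → ∑ i, F i z * F i z = 1)
    (hfree : ∀ z : ℂ, ‖z‖ = 1 → ∃ lam : ℝ, ∀ i, fderiv ℝ (F i) z z = lam * F i z)
    (θ : ℝ) :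
    (starRingEnd ℂ) (∑ i, (Complex.exp ((θ:ℂ) * I))^2 * h i (Complex.exp ((θ:ℂ) * I)) *
        ((Complex.exp ((θ:ℂ) * I))^2 * h i (Complex.exp ((θ:ℂ) * I))))
      = ∑ i, (Complex.exp ((θ:ℂ) * I))^2 * h i (Complex.exp ((θ:ℂ) * I)) *
        ((Complex.exp ((θ:ℂ) * I))^2 * h i (Complex.exp ((θ:ℂ) * I))) := by
  classical
  set γ : ℝ → ℂ := fun t => Complex.exp ((t : ℂ) * I) with hγdef
  have hγ' : ∀ t, HasDerivAt γ (I * γ t) t := fun t => hasDerivAt_circle t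
  have hγ1 : ∀ t, ‖γ t‖ = 1 := by
    intro t
    simp [hγdef, Complex.norm_exp]
  have hγU : ∀ t, γ t ∈ U := fun t => hsphereU _ (hγ1 t)
  set Fi : Fin n → ℝ → ℂ := fun i t => F i (γ t) with hFidef
  set Ai : Fin n → ℝ → ℂ := fun i t => γ t * g i (γ t) with hAidef
  set Bi : Fin n → ℝ → ℂ := fun i t => (γ t)^2 * h i (γ t) with hBidef
  set Λ : ℝ → ℂ := fun t => ∑ i, Fi i t * (Ai i t + (starRingEnd ℂ) (Ai i t)) with hΛdef
  set μ : ℝ → ℂ := fun t => ∑ i,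
      ((I * Ai i t + (starRingEnd ℂ) (I * Ai i t)) * (Ai i t + (starRingEnd ℂ) (Ai i t))
      + Fi i t * (I * (Ai i t + Bi i t) + (starRingEnd ℂ) (I * (Ai i t + Bi i t)))) with hμdef
  -- basic derivative facts
  have dF : ∀ i t, HasDerivAt (Fi i) (I * Ai i t + (starRingEnd ℂ) (I * Ai i t)) t := by
    intro i t
    have h0 := (hFd i _ (hγU t)).hasFDerivAt.comp_hasDerivAt t (hγ' t)
    rw [fderiv_apply_eq _ _ _ (hFd i _ (hγU t)), hwdzF i _ (hγU t),
      hwdzbarF i _ (hγU t)] at h0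
    have he : g i (γ t) * (I * γ t) + (starRingEnd ℂ) (g i (γ t)) * (starRingEnd ℂ) (I * γ t)
        = I * Ai i t + (starRingEnd ℂ) (I * Ai i t) := by
      simp only [hAidef, map_mul]
      ring
    rw [he] at h0
    exact h0
  have dA : ∀ i t, HasDerivAt (Ai i) (I * (Ai i t + Bi i t)) t := by
    intro i t
    have h1 := (hghol i _ (hγU t)).scomp t (hγ' t)
    rw [smul_eq_mul] at h1
    have h2 := (hγ' t).mul h1
    simp only [Function.comp_apply] at h2
    have he : I * γ t * g i (γ t) + γ t * (I * γ t * h i (γ t)) = I * (Ai i t + Bi i t) := by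
      simp only [hAidef, hBidef]; ring
    rw [he] at h2
    exact h2
  have dcA : ∀ i t, HasDerivAt (fun s => (starRingEnd ℂ) (Ai i s))
      ((starRingEnd ℂ) (I * (Ai i t + Bi i t))) t := fun i t => (dA i t).conj_comp
  have dΛ : ∀ t, HasDerivAt Λ (μ t) t := by
    intro t
    exact HasDerivAt.fun_sum fun i _ => ((dF i t).mul ((dA i t).add (dcA i t)))
  -- free boundary relation
  have hFA : ∀ i t, Ai i t + (starRingEnd ℂ) (Ai i t) = Λ t * Fi i t := by
    intro i t
    obtain ⟨lam, hlam⟩ := hfree (γ t) (hγ1 t)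
    have e : ∀ j, Ai j t + (starRingEnd ℂ) (Ai j t) = (lam : ℂ) * Fi j t := by
      intro j
      have h0 := hlam j
      rw [fderiv_apply_eq _ _ _ (hFd j _ (hγU t)), hwdzF j _ (hγU t),
        hwdzbarF j _ (hγU t)] at h0
      simp only [hAidef, hFidef, map_mul]
      linear_combination h0
    have hΛt : Λ t = (lam : ℂ) := by
      rw [hΛdef]
      simp only
      rw [Finset.sum_congr rfl (fun j _ => by rw [e j])]
      have he : ∑ j, Fi j t * ((lam : ℂ) * Fi j t) = (lam : ℂ) * ∑ j, Fi j t * Fi j t := by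
        rw [Finset.mul_sum]
        exact Finset.sum_congr rfl fun j _ => by ring
      rw [he, hFidef]
      simp only
      rw [hprop (γ t) (hγ1 t), mul_one]
    rw [hΛt]
    exact e i
  -- realness facts
  have hcF : ∀ i t, (starRingEnd ℂ) (Fi i t) = Fi i t := fun i t => hFreal i (γ t)
  have hcΛ : ∀ t, (starRingEnd ℂ) (Λ t) = Λ t := by
    intro t
    rw [hΛdef]
    simp only [map_sum, map_add, map_mul, Complex.conj_conj]
    exact Finset.sum_congr rfl fun i _ => by rw [hcF]; ring
  have hcμ : ∀ t, (starRingEnd ℂ) (μ t) = μ t := by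
    intro t
    have h1 := (dΛ t).conj_comp
    rw [show (fun s => (starRingEnd ℂ) (Λ s)) = Λ from funext fun s => hcΛ s] at h1
    exact h1.unique (dΛ t)
  -- conformality sums
  have sff : ∀ t, ∑ i, Fi i t * Fi i t = 1 := fun t => hprop _ (hγ1 t)
  have saa : ∀ t, ∑ i, Ai i t * Ai i t = 0 := by
    intro t
    rw [Finset.sum_congr rfl (fun i _ => show Ai i t * Ai i t
      = (γ t)^2 * (g i (γ t) * g i (γ t)) from by rw [hAidef]; ring),
      ← Finset.mul_sum, hconfg _ (hγU t), mul_zero]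
  have sab : ∀ t, ∑ i, Ai i t * Bi i t = 0 := by
    intro t
    rw [Finset.sum_congr rfl (fun i _ => show Ai i t * Bi i t
      = (γ t)^3 * (g i (γ t) * h i (γ t)) from by rw [hAidef, hBidef]; ring),
      ← Finset.mul_sum, hconf2 _ (hγU t), mul_zero]
  have csaa : ∀ t, ∑ i, (starRingEnd ℂ) (Ai i t) * (starRingEnd ℂ) (Ai i t) = 0 := by
    intro t
    rw [show ∑ i, (starRingEnd ℂ) (Ai i t) * (starRingEnd ℂ) (Ai i t)
      = (starRingEnd ℂ) (∑ i, Ai i t * Ai i t) from by rw [map_sum]; simp [map_mul]]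
    rw [saa t, map_zero]
  -- realness of the scalar sums
  have hcP : ∀ t, (starRingEnd ℂ) (∑ i, Ai i t * (starRingEnd ℂ) (Ai i t))
      = ∑ i, Ai i t * (starRingEnd ℂ) (Ai i t) := by
    intro t
    rw [map_sum]
    exact Finset.sum_congr rfl fun i _ => by rw [map_mul, Complex.conj_conj]; ring
  have hcN : ∀ t, (starRingEnd ℂ) (∑ i, (starRingEnd ℂ) (Bi i t) * Bi i t)
      = ∑ i, (starRingEnd ℂ) (Bi i t) * Bi i t := by
    intro t
    rw [map_sum]
    exact Finset.sum_congr rfl fun i _ => by rw [map_mul, Complex.conj_conj]; ring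
  have hcQ : ∀ t, (starRingEnd ℂ) (∑ i, (starRingEnd ℂ) (Ai i t) * Bi i t)
      = ∑ i, Ai i t * (starRingEnd ℂ) (Bi i t) := by
    intro t
    rw [map_sum]
    exact Finset.sum_congr rfl fun i _ => by rw [map_mul, Complex.conj_conj]
  have hcQc : ∀ t, (starRingEnd ℂ) (∑ i, Ai i t * (starRingEnd ℂ) (Bi i t))
      = ∑ i, (starRingEnd ℂ) (Ai i t) * Bi i t := by
    intro t
    rw [map_sum]
    exact Finset.sum_congr rfl fun i _ => by rw [map_mul, Complex.conj_conj]
  -- SFA is real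
  have eSFAc : ∀ t, ∑ i, Fi i t * Ai i t = ∑ i, Fi i t * (starRingEnd ℂ) (Ai i t) := by
    intro t
    have d1 : HasDerivAt (fun s => ∑ i, Fi i s * Fi i s)
        (∑ i, ((I * Ai i t + (starRingEnd ℂ) (I * Ai i t)) * Fi i t
          + Fi i t * (I * Ai i t + (starRingEnd ℂ) (I * Ai i t)))) t :=
      HasDerivAt.fun_sum fun i _ => (dF i t).mul (dF i t)
    have d0 : HasDerivAt (fun s => ∑ i, Fi i s * Fi i s) 0 t := by
      rw [show (fun s : ℝ => ∑ i, Fi i s * Fi i s) = fun _ => (1:ℂ) from funext fun s => sff s]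
      exact hasDerivAt_const t 1
    have e0 := d1.unique d0
    have expand : ∑ i, ((I * Ai i t + (starRingEnd ℂ) (I * Ai i t)) * Fi i t
          + Fi i t * (I * Ai i t + (starRingEnd ℂ) (I * Ai i t)))
        = 2*I*(∑ i, Fi i t * Ai i t) - 2*I*(∑ i, Fi i t * (starRingEnd ℂ) (Ai i t)) := by
      simp only [Finset.mul_sum, ← Finset.sum_sub_distrib]
      exact Finset.sum_congr rfl fun i _ => by
        simp only [map_mul, Complex.conj_I]; ring
    rw [expand] at e0
    linear_combination (-(I/2)) * e0 + (∑ i, Fi i t * Ai i t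
      - ∑ i, Fi i t * (starRingEnd ℂ) (Ai i t)) * Complex.I_sq
  have hcSFA : ∀ t, (starRingEnd ℂ) (∑ i, Fi i t * Ai i t) = ∑ i, Fi i t * Ai i t := by
    intro t
    rw [map_sum]
    rw [Finset.sum_congr rfl (fun i _ => show (starRingEnd ℂ) (Fi i t * Ai i t)
      = Fi i t * (starRingEnd ℂ) (Ai i t) from by rw [map_mul, hcF])]
    exact (eSFAc t).symm
  have hSFA : ∀ t, 2 * (∑ i, Fi i t * Ai i t) = Λ t := by
    intro t
    rw [hΛdef]
    simp only
    rw [show ∑ i, Fi i t * (Ai i t + (starRingEnd ℂ) (Ai i t))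
      = (∑ i, Fi i t * Ai i t) + ∑ i, Fi i t * (starRingEnd ℂ) (Ai i t) from by
        rw [← Finset.sum_add_distrib]
        exact Finset.sum_congr rfl fun i _ => by ring]
    rw [← eSFAc t]
    ring
  -- 2 P = Λ²
  have hP2 : ∀ t, 2 * (∑ i, Ai i t * (starRingEnd ℂ) (Ai i t)) = Λ t * Λ t := by
    intro t
    have h1 : ∑ i, (Ai i t + (starRingEnd ℂ) (Ai i t)) * (Ai i t + (starRingEnd ℂ) (Ai i t))
        = Λ t * Λ t := by
      rw [Finset.sum_congr rfl (fun i _ => by rw [hFA i t])]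
      rw [show ∑ i, (Λ t * Fi i t) * (Λ t * Fi i t) = Λ t * Λ t * ∑ i, Fi i t * Fi i t from by
        rw [Finset.mul_sum]; exact Finset.sum_congr rfl fun i _ => by ring]
      rw [sff t, mul_one]
    have h2 : ∑ i, (Ai i t + (starRingEnd ℂ) (Ai i t)) * (Ai i t + (starRingEnd ℂ) (Ai i t))
        = (∑ i, Ai i t * Ai i t) + 2*(∑ i, Ai i t * (starRingEnd ℂ) (Ai i t))
          + ∑ i, (starRingEnd ℂ) (Ai i t) * (starRingEnd ℂ) (Ai i t) := by
      simp only [Finset.mul_sum, ← Finset.sum_add_distrib]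
      exact Finset.sum_congr rfl fun i _ => by ring
    rw [h2, saa t, csaa t] at h1
    linear_combination h1
  -- derivative of SFA : get SFB relation
  have eSFB : ∀ t, I * ((∑ i, Fi i t * Ai i t) + (∑ i, Fi i t * Bi i t)
      - (∑ i, Ai i t * (starRingEnd ℂ) (Ai i t))) = μ t / 2 := by
    intro t
    have dSFA : HasDerivAt (fun s => ∑ i, Fi i s * Ai i s)
        (∑ i, ((I * Ai i t + (starRingEnd ℂ) (I * Ai i t)) * Ai i t
          + Fi i t * (I * (Ai i t + Bi i t)))) t :=
      HasDerivAt.fun_sum fun i _ => (dF i t).mul (dA i t)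
    have dR : HasDerivAt (fun s => Λ s / 2) (μ t / 2) t := (dΛ t).div_const 2
    rw [show (fun s => ∑ i, Fi i s * Ai i s) = (fun s => Λ s / 2) from funext fun s => by
      have := hSFA s; linear_combination this / 2] at dSFA
    have e3 := dSFA.unique dR
    have expand : ∑ i, ((I * Ai i t + (starRingEnd ℂ) (I * Ai i t)) * Ai i t
          + Fi i t * (I * (Ai i t + Bi i t)))
        = I*(∑ i, Ai i t * Ai i t) - I*(∑ i, Ai i t * (starRingEnd ℂ) (Ai i t))
          + I*(∑ i, Fi i t * Ai i t) + I*(∑ i, Fi i t * Bi i t) := by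
      simp only [Finset.mul_sum, ← Finset.sum_add_distrib, ← Finset.sum_sub_distrib]
      exact Finset.sum_congr rfl fun i _ => by
        simp only [map_mul, Complex.conj_I]; ring
    rw [expand, saa t] at e3
    linear_combination e3
  have ecSFB : ∀ t, -I * ((∑ i, Fi i t * Ai i t)
      + (starRingEnd ℂ) (∑ i, Fi i t * Bi i t)
      - (∑ i, Ai i t * (starRingEnd ℂ) (Ai i t))) = μ t / 2 := by
    intro t
    have h1 := congrArg (starRingEnd ℂ) (eSFB t)
    simp only [map_mul, map_sub, map_add, map_div₀, Complex.conj_I, hcSFA t, hcP t, hcμ t,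
      map_ofNat] at h1
    linear_combination h1
  -- derivative of P : relation for Q
  have eQ : ∀ t, I * ((∑ i, (starRingEnd ℂ) (Ai i t) * Bi i t)
      - (∑ i, Ai i t * (starRingEnd ℂ) (Bi i t))) = Λ t * μ t := by
    intro t
    have dP : HasDerivAt (fun s => ∑ i, Ai i s * (starRingEnd ℂ) (Ai i s))
        (∑ i, ((I * (Ai i t + Bi i t)) * (starRingEnd ℂ) (Ai i t)
          + Ai i t * (starRingEnd ℂ) (I * (Ai i t + Bi i t)))) t :=
      HasDerivAt.fun_sum fun i _ => (dA i t).mul (dcA i t)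
    have dR : HasDerivAt (fun s => Λ s * Λ s / 2) (Λ t * μ t) t := by
      have := ((dΛ t).mul (dΛ t)).div_const 2
      rw [show (μ t * Λ t + Λ t * μ t) / 2 = Λ t * μ t from by ring] at this
      exact this
    rw [show (fun s => ∑ i, Ai i s * (starRingEnd ℂ) (Ai i s)) = (fun s => Λ s * Λ s / 2)
      from funext fun s => by have := hP2 s; linear_combination this / 2] at dP
    have e4 := dP.unique dR
    have expand : ∑ i, ((I * (Ai i t + Bi i t)) * (starRingEnd ℂ) (Ai i t)
          + Ai i t * (starRingEnd ℂ) (I * (Ai i t + Bi i t)))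
        = I*(∑ i, (starRingEnd ℂ) (Ai i t) * Bi i t)
          - I*(∑ i, Ai i t * (starRingEnd ℂ) (Bi i t)) := by
      simp only [Finset.mul_sum, ← Finset.sum_sub_distrib]
      exact Finset.sum_congr rfl fun i _ => by
        simp only [map_mul, map_add, Complex.conj_I]; ring
    rw [expand] at e4
    linear_combination e4
  -- differentiated free boundary equation
  have Ei : ∀ i t, I * (Ai i t + Bi i t) + (starRingEnd ℂ) (I * (Ai i t + Bi i t))
      = μ t * Fi i t + Λ t * (I * Ai i t + (starRingEnd ℂ) (I * Ai i t)) := by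
    intro i t
    have dL := (dA i t).add (dcA i t)
    change HasDerivAt (fun s => Ai i s + (starRingEnd ℂ) (Ai i s)) _ t at dL
    rw [show (fun s => Ai i s + (starRingEnd ℂ) (Ai i s)) = (fun s => Λ s * Fi i s)
      from funext fun s => hFA i s] at dL
    exact dL.unique ((dΛ t).mul (dF i t))
  -- the key summed identity
  have key1 : ∀ t, I*(∑ i, Bi i t * Bi i t) - I*(∑ i, Ai i t * (starRingEnd ℂ) (Ai i t))
      - I*(∑ i, (starRingEnd ℂ) (Ai i t) * Bi i t)
      - I*(∑ i, Ai i t * (starRingEnd ℂ) (Bi i t))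
      - I*(∑ i, (starRingEnd ℂ) (Bi i t) * Bi i t)
      = μ t * (∑ i, Fi i t * Ai i t) + μ t * (∑ i, Fi i t * Bi i t)
        - I*(Λ t)*(∑ i, Ai i t * (starRingEnd ℂ) (Ai i t))
        - I*(Λ t)*(∑ i, (starRingEnd ℂ) (Ai i t) * Bi i t) := by
    intro t
    have key0 : ∑ i, ((I * (Ai i t + Bi i t) + (starRingEnd ℂ) (I * (Ai i t + Bi i t)))
          * (Ai i t + Bi i t))
        = ∑ i, ((μ t * Fi i t + Λ t * (I * Ai i t + (starRingEnd ℂ) (I * Ai i t)))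
          * (Ai i t + Bi i t)) :=
      Finset.sum_congr rfl fun i _ => by rw [Ei i t]
    have expandL : ∑ i, ((I * (Ai i t + Bi i t) + (starRingEnd ℂ) (I * (Ai i t + Bi i t)))
          * (Ai i t + Bi i t))
        = I*(∑ i, Ai i t * Ai i t) + 2*I*(∑ i, Ai i t * Bi i t) + I*(∑ i, Bi i t * Bi i t)
          - I*(∑ i, Ai i t * (starRingEnd ℂ) (Ai i t))
          - I*(∑ i, (starRingEnd ℂ) (Ai i t) * Bi i t)
          - I*(∑ i, Ai i t * (starRingEnd ℂ) (Bi i t))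
          - I*(∑ i, (starRingEnd ℂ) (Bi i t) * Bi i t) := by
      simp only [Finset.mul_sum, ← Finset.sum_add_distrib, ← Finset.sum_sub_distrib]
      exact Finset.sum_congr rfl fun i _ => by
        simp only [map_mul, map_add, Complex.conj_I]; ring
    have expandR : ∑ i, ((μ t * Fi i t + Λ t * (I * Ai i t + (starRingEnd ℂ) (I * Ai i t)))
          * (Ai i t + Bi i t))
        = μ t * (∑ i, Fi i t * Ai i t) + μ t * (∑ i, Fi i t * Bi i t)
          + I*(Λ t)*(∑ i, Ai i t * Ai i t) + I*(Λ t)*(∑ i, Ai i t * Bi i t)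
          - I*(Λ t)*(∑ i, Ai i t * (starRingEnd ℂ) (Ai i t))
          - I*(Λ t)*(∑ i, (starRingEnd ℂ) (Ai i t) * Bi i t) := by
      simp only [Finset.mul_sum, ← Finset.sum_add_distrib, ← Finset.sum_sub_distrib]
      exact Finset.sum_congr rfl fun i _ => by
        simp only [map_mul, map_add, Complex.conj_I]; ring
    rw [expandL, expandR] at key0
    rw [saa t, sab t] at key0
    linear_combination key0
  -- conjugated key identity
  have key2 : ∀ t, -(I*((starRingEnd ℂ) (∑ i, Bi i t * Bi i t)))
      + I*(∑ i, Ai i t * (starRingEnd ℂ) (Ai i t))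
      + I*(∑ i, Ai i t * (starRingEnd ℂ) (Bi i t))
      + I*(∑ i, (starRingEnd ℂ) (Ai i t) * Bi i t)
      + I*(∑ i, (starRingEnd ℂ) (Bi i t) * Bi i t)
      = μ t * (∑ i, Fi i t * Ai i t) + μ t * ((starRingEnd ℂ) (∑ i, Fi i t * Bi i t))
        + I*(Λ t)*(∑ i, Ai i t * (starRingEnd ℂ) (Ai i t))
        + I*(Λ t)*(∑ i, Ai i t * (starRingEnd ℂ) (Bi i t)) := by
    intro t
    have h1 := congrArg (starRingEnd ℂ) (key1 t)
    simp only [map_mul, map_sub, map_add, Complex.conj_I, hcSFA t, hcP t, hcμ t, hcΛ t,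
      hcQ t, hcQc t, hcN t] at h1
    linear_combination h1
  -- SFB + conj SFB
  have stepA : ∀ t, (∑ i, Fi i t * Bi i t) + (starRingEnd ℂ) (∑ i, Fi i t * Bi i t)
      = 2*(∑ i, Ai i t * (starRingEnd ℂ) (Ai i t)) - Λ t := by
    intro t
    have h5 : I * (2*(∑ i, Fi i t * Ai i t) + (∑ i, Fi i t * Bi i t)
        + (starRingEnd ℂ) (∑ i, Fi i t * Bi i t)
        - 2*(∑ i, Ai i t * (starRingEnd ℂ) (Ai i t))) = 0 := by
      linear_combination eSFB t - ecSFB t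
    have h6 : 2*(∑ i, Fi i t * Ai i t) + (∑ i, Fi i t * Bi i t)
        + (starRingEnd ℂ) (∑ i, Fi i t * Bi i t)
        - 2*(∑ i, Ai i t * (starRingEnd ℂ) (Ai i t)) = 0 := by
      linear_combination (-I) * h5 + (2*(∑ i, Fi i t * Ai i t) + (∑ i, Fi i t * Bi i t)
        + (starRingEnd ℂ) (∑ i, Fi i t * Bi i t)
        - 2*(∑ i, Ai i t * (starRingEnd ℂ) (Ai i t))) * Complex.I_sq
    linear_combination h6 - hSFA t
  -- conclude
  have hz : I * ((starRingEnd ℂ) (∑ i, Bi i θ * Bi i θ) - (∑ i, Bi i θ * Bi i θ)) = 0 := by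
    linear_combination (-1 : ℂ)*(key1 θ) + (-1 : ℂ)*(key2 θ) + Λ θ * (eQ θ)
      - μ θ * (stepA θ) - μ θ * (hSFA θ) - μ θ * (hP2 θ)
  show (starRingEnd ℂ) (∑ i, Bi i θ * Bi i θ) = ∑ i, Bi i θ * Bi i θ
  linear_combination (-I) * hz
    + ((starRingEnd ℂ) (∑ i, Bi i θ * Bi i θ) - (∑ i, Bi i θ * Bi i θ)) * Complex.I_sq


open Complex in
/-- For a proper branched minimal immersion `u : D → Bⁿ` of the unit disk into the unit
ball meeting the boundary sphere orthogonally (free boundary: `u_r ∥ u` on `∂D`), the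
holomorphic quartic differential `z⁴ (u_{zz} · u_{zz})` vanishes identically on `D`. -/
theorem quartic_differential_vanishes (n : ℕ) (U : Set ℂ) (hU : IsOpen U)
    (hDU : closedBall (0 : ℂ) 1 ⊆ U)
    (u : ℂ → (Fin n → ℝ)) (hu : ContDiffOn ℝ (⊤ : ℕ∞) u U)
    (hharm : ∀ z ∈ U, wdzbar (wdz (cplx u)) z = 0)
    (hconf : ∀ z ∈ U, (∑ i, wdz (cplx u) z i * wdz (cplx u) z i) = 0)
    (hball : ∀ z ∈ closedBall (0 : ℂ) 1, ∑ i, (u z i) ^ 2 ≤ 1)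
    (hproper : ∀ z : ℂ, ‖z‖ = 1 → ∑ i, (u z i) ^ 2 = 1)
    (hfree : ∀ z : ℂ, ‖z‖ = 1 → ∃ lam : ℝ, fderiv ℝ u z z = lam • u z) :
    ∀ z ∈ ball (0 : ℂ) 1,
      z ^ 4 * (∑ i, wdz (wdz (cplx u)) z i * wdz (wdz (cplx u)) z i) = 0 := by
  classical
  have hsphereU : ∀ z : ℂ, ‖z‖ = 1 → z ∈ U := fun z hz =>
    hDU (by rw [mem_closedBall_zero_iff, hz])
  have hballU : ball (0 : ℂ) 1 ⊆ U := fun z hz => hDU (ball_subset_closedBall hz)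
  -- smoothness of the complexification
  have hfC : ContDiffOn ℝ (⊤ : ℕ∞) (cplx u) U := by
    have he : cplx u = (ContinuousLinearMap.pi (fun i : Fin n =>
        Complex.ofRealCLM.comp (ContinuousLinearMap.proj (R := ℝ)
          (φ := fun _ : Fin n => ℝ) i))) ∘ u := rfl
    rw [he]
    exact (ContinuousLinearMap.contDiff _).comp_contDiffOn hu
  have hDC : ContDiffOn ℝ (⊤ : ℕ∞) (fderiv ℝ (cplx u)) U := hfC.fderiv_of_isOpen hU (by simp)
  have hGC : ContDiffOn ℝ (⊤ : ℕ∞) (wdz (cplx u)) U := by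
    have h1 : ContDiffOn ℝ (⊤ : ℕ∞) (fun z => fderiv ℝ (cplx u) z 1) U :=
      hDC.clm_apply contDiffOn_const
    have h2 : ContDiffOn ℝ (⊤ : ℕ∞) (fun z => fderiv ℝ (cplx u) z I) U :=
      hDC.clm_apply contDiffOn_const
    have he : wdz (cplx u) = fun z =>
        (1/2 : ℂ) • (fderiv ℝ (cplx u) z 1 - I • fderiv ℝ (cplx u) z I) := rfl
    rw [he]
    exact (h1.sub (h2.const_smul I)).const_smul _
  have hGdiff : ∀ z ∈ U, DifferentiableAt ℝ (wdz (cplx u)) z := fun z hz =>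
    (hGC.differentiableOn (by simp)).differentiableAt (hU.mem_nhds hz)
  have hfdiff : ∀ z ∈ U, DifferentiableAt ℝ (cplx u) z := fun z hz =>
    (hfC.differentiableOn (by simp)).differentiableAt (hU.mem_nhds hz)
  have hudiff : ∀ z ∈ U, DifferentiableAt ℝ u z := fun z hz =>
    (hu.differentiableOn (by simp)).differentiableAt (hU.mem_nhds hz)
  -- coordinate functions
  set F : Fin n → ℂ → ℂ := fun i z => ((u z i : ℝ) : ℂ) with hFdef
  set g : Fin n → ℂ → ℂ := fun i z => wdz (cplx u) z i with hgdef
  set h : Fin n → ℂ → ℂ := fun i => deriv (g i) with hhdef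
  have hFd : ∀ i, ∀ z ∈ U, DifferentiableAt ℝ (F i) z := by
    intro i z hz
    have := (Complex.ofRealCLM.hasFDerivAt.comp z
      (((ContinuousLinearMap.proj (R := ℝ) (φ := fun _ : Fin n => ℝ) i).hasFDerivAt.comp z
        (hudiff z hz).hasFDerivAt))).differentiableAt
    exact this
  have hFreal : ∀ i z, (starRingEnd ℂ) (F i z) = F i z := fun i z => Complex.conj_ofReal _
  have hgRdiff : ∀ i, ∀ z ∈ U, DifferentiableAt ℝ (g i) z := by
    intro i z hz
    exact (((ContinuousLinearMap.proj (R := ℝ) (φ := fun _ : Fin n => ℂ) i).hasFDerivAt.comp z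
      (hGdiff z hz).hasFDerivAt)).differentiableAt
  have hwdzF : ∀ i, ∀ z ∈ U, wdz (F i) z = g i z := by
    intro i z hz
    exact wdz_proj (cplx u) z i (hfdiff z hz)
  have hwdzbarF : ∀ i, ∀ z ∈ U, wdzbar (F i) z = (starRingEnd ℂ) (g i z) := by
    intro i z hz
    have hud : DifferentiableAt ℝ (fun y => u y i) z :=
      (((ContinuousLinearMap.proj (R := ℝ) (φ := fun _ : Fin n => ℝ) i).hasFDerivAt.comp z
        (hudiff z hz).hasFDerivAt)).differentiableAt
    have h1 : wdzbar (F i) z = (starRingEnd ℂ) (wdz (F i) z) :=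
      wdzbar_eq_conj_wdz (fun y => u y i) z hud
    rw [h1, hwdzF i z hz]
  -- the coordinates of wdz (cplx u) are holomorphic
  have hgbar : ∀ i, ∀ z ∈ U, wdzbar (g i) z = 0 := by
    intro i z hz
    have h1 : wdzbar (fun y => wdz (cplx u) y i) z = wdzbar (wdz (cplx u)) z i :=
      wdzbar_proj (wdz (cplx u)) z i (hGdiff z hz)
    have h2 : wdzbar (g i) z = wdzbar (wdz (cplx u)) z i := h1
    rw [h2, hharm z hz]
    rfl
  have hghol : ∀ i, ∀ z ∈ U, HasDerivAt (g i) (h i z) z := by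
    intro i z hz
    have h0 := hasDerivAt_of_wdzbar_eq_zero (g i) z (hgRdiff i z hz) (hgbar i z hz)
    have h1 : h i z = wdz (g i) z := h0.deriv
    rw [h1]
    exact h0
  have hgdiffC : ∀ i, DifferentiableOn ℂ (g i) U := fun i z hz =>
    (hghol i z hz).differentiableAt.differentiableWithinAt
  have hhC : ∀ i, DifferentiableOn ℂ (h i) U := fun i =>
    (((hgdiffC i).analyticOnNhd hU).deriv).differentiableOn
  -- conformality
  have hconfg : ∀ z ∈ U, ∑ i, g i z * g i z = 0 := fun z hz => hconf z hz
  have hconf2 : ∀ z ∈ U, ∑ i, g i z * h i z = 0 := by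
    intro z hz
    have d1 : HasDerivAt (fun w => ∑ i, g i w * g i w)
        (∑ i, (h i z * g i z + g i z * h i z)) z :=
      HasDerivAt.fun_sum fun i _ => (hghol i z hz).mul (hghol i z hz)
    have d0 : HasDerivAt (fun w => ∑ i, g i w * g i w) 0 z := by
      have ev : (fun w => ∑ i, g i w * g i w) =ᶠ[nhds z] (fun _ => (0:ℂ)) :=
        Filter.eventually_of_mem (hU.mem_nhds hz) (fun w hw => hconfg w hw)
      exact (hasDerivAt_const z (0:ℂ)).congr_of_eventuallyEq ev
    have e0 := d1.unique d0
    have e1 : ∑ i, (h i z * g i z + g i z * h i z) = 2 * ∑ i, g i z * h i z := by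
      rw [Finset.mul_sum]
      exact Finset.sum_congr rfl fun i _ => by ring
    rw [e1] at e0
    exact (mul_eq_zero.mp e0).resolve_left two_ne_zero
  -- facts feeding the boundary lemma
  have hprop' : ∀ z : ℂ, ‖z‖ = 1 → ∑ i, F i z * F i z = 1 := by
    intro z hz
    have h1 : ((∑ i, (u z i)^2 : ℝ) : ℂ) = ∑ i, F i z * F i z := by
      push_cast
      exact Finset.sum_congr rfl fun i _ => by rw [hFdef]; push_cast; ring
    rw [← h1, hproper z hz]
    norm_num
  have hfree' : ∀ z : ℂ, ‖z‖ = 1 → ∃ lam : ℝ, ∀ i, fderiv ℝ (F i) z z = lam * F i z := by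
    intro z hz
    obtain ⟨lam, hlam⟩ := hfree z hz
    refine ⟨lam, fun i => ?_⟩
    have hud : DifferentiableAt ℝ (fun y => u y i) z :=
      (((ContinuousLinearMap.proj (R := ℝ) (φ := fun _ : Fin n => ℝ) i).hasFDerivAt.comp z
        (hudiff z (hsphereU z hz)).hasFDerivAt)).differentiableAt
    have h1 : fderiv ℝ (F i) z z = ((fderiv ℝ (fun y => u y i) z z : ℝ) : ℂ) :=
      fderiv_ofReal_comp (fun y => u y i) z z hud
    have h2 : fderiv ℝ (fun y => u y i) z =
        (ContinuousLinearMap.proj (R := ℝ) (φ := fun _ : Fin n => ℝ) i).comp (fderiv ℝ u z) :=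
      ((ContinuousLinearMap.proj (R := ℝ) (φ := fun _ : Fin n => ℝ) i).hasFDerivAt.comp z
        (hudiff z (hsphereU z hz)).hasFDerivAt).fderiv
    have h3 : fderiv ℝ (fun y => u y i) z z = lam * u z i := by
      rw [h2]
      simp only [ContinuousLinearMap.coe_comp', Function.comp_apply,
        ContinuousLinearMap.proj_apply, hlam]
      simp
    rw [h1, h3, hFdef]
    push_cast
    ring
  -- boundary reality of ψ
  set ψ : ℂ → ℂ := fun z => z^4 * ∑ i, h i z * h i z with hψdef
  have hbdry : ∀ z : ℂ, ‖z‖ = 1 → (starRingEnd ℂ) (ψ z) = ψ z := by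
    intro z hz
    have hb := boundary_real U hsphereU F g h hFd hFreal hwdzF hwdzbarF hghol hconfg hconf2
      hprop' hfree' z.arg
    have hzexp : Complex.exp ((z.arg : ℂ) * I) = z := by
      have := Complex.norm_mul_exp_arg_mul_I z
      rwa [hz, Complex.ofReal_one,
        one_mul] at this
    rw [hzexp] at hb
    have hψT : ψ z = ∑ i, z^2 * h i z * (z^2 * h i z) := by
      rw [hψdef]
      simp only
      rw [Finset.mul_sum]
      exact Finset.sum_congr rfl fun i _ => by ring
    rw [hψT]
    exact hb
  -- maximum modulus argument
  have hψdU : DifferentiableOn ℂ ψ U := by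
    apply DifferentiableOn.mul
    · exact (differentiable_pow 4).differentiableOn
    · exact DifferentiableOn.fun_sum fun i _ => (hhC i).mul (hhC i)
  have hψball : DifferentiableOn ℂ ψ (ball 0 1) := hψdU.mono hballU
  have hψcont : ContinuousOn ψ (closedBall 0 1) := (hψdU.continuousOn).mono hDU
  have hψim : ∀ w ∈ sphere (0:ℂ) 1, (ψ w).im = 0 := by
    intro w hw
    have := hbdry w (mem_sphere_zero_iff_norm.mp hw)
    exact Complex.conj_eq_iff_im.mp this
  have hnorm1 : ∀ (s : ℝ) (w : ℂ), w ∈ sphere (0:ℂ) 1 → ‖Complex.exp ((s : ℂ) * I * ψ w)‖ = 1 := by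
    intro s w hw
    rw [Complex.norm_exp]
    have : ((s : ℂ) * I * ψ w).re = -s * (ψ w).im := by
      simp [Complex.mul_re, Complex.mul_im]
    rw [this, hψim w hw]
    simp
  have hbound : ∀ (s : ℝ) (w : ℂ), w ∈ closedBall (0:ℂ) 1 →
      ‖Complex.exp ((s : ℂ) * I * ψ w)‖ ≤ 1 := by
    intro s w hw
    have hdc : DiffContOnCl ℂ (fun z => Complex.exp ((s : ℂ) * I * ψ z)) (ball 0 1) := by
      constructor
      · exact ((hψball.const_mul ((s:ℂ) * I)).cexp)
      · rw [closure_ball (0:ℂ) one_ne_zero]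
        exact Complex.continuous_exp.comp_continuousOn (hψcont.const_smul ((s:ℂ)*I))
    have hfr : ∀ w ∈ frontier (ball (0:ℂ) 1),
        ‖Complex.exp ((s : ℂ) * I * ψ w)‖ ≤ 1 := by
      intro w hw
      rw [frontier_ball (0:ℂ) one_ne_zero] at hw
      exact le_of_eq (hnorm1 s w hw)
    have hcl : w ∈ closure (ball (0:ℂ) 1) := by
      rw [closure_ball (0:ℂ) one_ne_zero]; exact hw
    exact norm_le_of_forall_mem_frontier_norm_le isBounded_ball hdc hfr hcl
  have hnormball : ∀ w ∈ closedBall (0:ℂ) 1, ‖Complex.exp (I * ψ w)‖ = 1 := by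
    intro w hw
    have h1 := hbound 1 w hw
    have h2 := hbound (-1) w hw
    rw [Complex.ofReal_one, one_mul] at h1
    have hmul : Complex.exp (I * ψ w) * Complex.exp (((-1 : ℝ) : ℂ) * I * ψ w) = 1 := by
      rw [← Complex.exp_add]
      push_cast
      rw [show I * ψ w + -1 * I * ψ w = 0 from by ring, Complex.exp_zero]
    have h3 : ‖Complex.exp (I * ψ w)‖ * ‖Complex.exp (((-1 : ℝ) : ℂ) * I * ψ w)‖ = 1 := by
      rw [← norm_mul, hmul, norm_one]
    nlinarith [norm_nonneg (Complex.exp (I * ψ w)),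
      norm_nonneg (Complex.exp (((-1 : ℝ) : ℂ) * I * ψ w))]
  -- E1 := exp (I ψ) has constant modulus 1 on the ball, hence is constant
  have hE1diff : DifferentiableOn ℂ (fun z => Complex.exp (I * ψ z)) (ball 0 1) :=
    (hψball.const_mul I).cexp
  have hmax : IsMaxOn (norm ∘ (fun z => Complex.exp (I * ψ z))) (ball (0:ℂ) 1) 0 := by
    intro w hw
    simp only [Function.comp_apply, Set.mem_setOf_eq]
    rw [hnormball w (ball_subset_closedBall hw), hnormball 0 (ball_subset_closedBall
      (mem_ball_self zero_lt_one))]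
  have heq := Complex.eqOn_of_isPreconnected_of_isMaxOn_norm
    (convex_ball (0:ℂ) 1).isPreconnected isOpen_ball hE1diff (mem_ball_self zero_lt_one) hmax
  have hψ0 : ψ 0 = 0 := by rw [hψdef]; simp
  have hE1const : ∀ w ∈ ball (0:ℂ) 1, Complex.exp (I * ψ w) = 1 := by
    intro w hw
    have := heq hw
    simp only [Function.const_apply] at this
    rw [this, hψ0, mul_zero, Complex.exp_zero]
  -- hence deriv ψ = 0 on the ball
  have hψdball : ∀ w ∈ ball (0:ℂ) 1, DifferentiableAt ℂ ψ w := fun w hw =>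
    hψdU.differentiableAt (hU.mem_nhds (hballU hw))
  have hderiv0 : ∀ w ∈ ball (0:ℂ) 1, deriv ψ w = 0 := by
    intro w hw
    have d1 : HasDerivAt (fun z => Complex.exp (I * ψ z))
        (Complex.exp (I * ψ w) * (I * deriv ψ w)) w :=
      (((hψdball w hw).hasDerivAt).const_mul I).cexp
    have d0 : HasDerivAt (fun z => Complex.exp (I * ψ z)) 0 w := by
      have ev : (fun z => Complex.exp (I * ψ z)) =ᶠ[nhds w] (fun _ => (1:ℂ)) :=
        Filter.eventually_of_mem (isOpen_ball.mem_nhds hw) (fun y hy => hE1const y hy)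
      exact (hasDerivAt_const w (1:ℂ)).congr_of_eventuallyEq ev
    have e0 := d1.unique d0
    have hne : Complex.exp (I * ψ w) ≠ 0 := Complex.exp_ne_zero _
    have h1 : I * deriv ψ w = 0 := by
      rcases mul_eq_zero.mp e0 with h | h
      · exact absurd h hne
      · exact h
    rcases mul_eq_zero.mp h1 with h | h
    · exact absurd h Complex.I_ne_zero
    · exact h
  -- ψ is constant 0 on the ball
  have hψzero : ∀ w ∈ ball (0:ℂ) 1, ψ w = 0 := by
    intro w hw
    have hconst := (convex_ball (0:ℂ) 1).is_const_of_fderivWithin_eq_zero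
      (hψball) (fun x hx => ?_) hw (mem_ball_self zero_lt_one)
    · rw [hconst, hψ0]
    · rw [fderivWithin_of_isOpen isOpen_ball hx]
      have : HasDerivAt ψ 0 x := by
        have := (hψdball x hx).hasDerivAt
        rwa [hderiv0 x hx] at this
      have hF := this.hasFDerivAt.fderiv
      rw [hF]
      ext v
      simp
  -- conclusion
  intro z hz
  have hcoord : ∀ i, wdz (wdz (cplx u)) z i = h i z := by
    intro i
    have h1 : wdz (fun y => wdz (cplx u) y i) z = wdz (wdz (cplx u)) z i :=
      wdz_proj (wdz (cplx u)) z i (hGdiff z (hballU hz))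
    have h2 : wdz (g i) z = h i z :=
      wdz_eq_deriv_of_hasDerivAt _ _ _ (hghol i z (hballU hz))
    rw [← h1]
    exact h2
  have : (∑ i, wdz (wdz (cplx u)) z i * wdz (wdz (cplx u)) z i) = ∑ i, h i z * h i z :=
    Finset.sum_congr rfl fun i _ => by rw [hcoord i]
  rw [this]
  exact hψzero z hz
end

section
/- Let Σ be an immersed surface in a Riemannian manifold N of constant sectional curvature with parallel mean curvature vector H. Then in any local conformal coordinate z on Σ, the normal-bundle-valued Hopf differential A(∂_z, ∂_z) is anti-holomorphic-derivative-free: ∇^⊥_{∂_z̄} A(∂_z, ∂_z) = 0. -/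
/-- For a surface with parallel mean curvature vector in a constant curvature space, the
Hopf differential `A(∂_z,∂_z) = (1/4)[(A₁₁ - A₂₂) - 2iA₁₂]` satisfies
`∇^⊥_{∂_z̄} A(∂_z,∂_z) = 0`.  Here `DA i j k` denotes the components (in a parallel
orthonormal normal frame, so `m` real components) of the covariant derivative
`A_{jk,i} = (∇^⊥_{∂_{x_i}} A)(∂_{x_j},∂_{x_k})` at a point of the surface, in a
conformal coordinate `z = x₁ + i x₂`; symmetry of `A`, the Codazzi equations (valid by
constant curvature) and parallel mean curvature give the vanishing. -/
theorem hopf_differential_antiholomorphic_derivative_free (m : ℕ)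
    (DA : Fin 2 → Fin 2 → Fin 2 → (Fin m → ℝ))
    (hsymm : ∀ i j k, DA i j k = DA i k j)
    (hcodazzi : ∀ i j k, DA i j k = DA j i k)
    (hparallelH : ∀ i, DA i 0 0 + DA i 1 1 = 0) :
    ∀ l : Fin m,
      (1 / 2 : ℂ) *
        ((1 / 4 : ℂ) * (((DA 0 0 0 l - DA 0 1 1 l : ℝ) : ℂ) - 2 * Complex.I * ((DA 0 0 1 l : ℝ) : ℂ))
          + Complex.I *
            ((1 / 4 : ℂ) * (((DA 1 0 0 l - DA 1 1 1 l : ℝ) : ℂ) - 2 * Complex.I * ((DA 1 0 1 l : ℝ) : ℂ))))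
      = 0 := by
  intro l
  have h0 := congrFun (hparallelH 0) l
  have h1 := congrFun (hparallelH 1) l
  have hb : DA 0 1 1 l = DA 1 0 1 l := congrFun (hcodazzi 0 1 1) l
  have hc : DA 0 0 1 l = DA 1 0 0 l := by
    rw [congrFun (hsymm 0 0 1) l, congrFun (hcodazzi 0 1 0) l, congrFun (hsymm 1 0 0) l]
  simp only [Pi.add_apply, Pi.zero_apply] at h0 h1
  have h0' : ((DA 0 0 0 l : ℝ) : ℂ) + ((DA 0 1 1 l : ℝ) : ℂ) = 0 := by exact_mod_cast h0
  have h1' : ((DA 1 0 0 l : ℝ) : ℂ) + ((DA 1 1 1 l : ℝ) : ℂ) = 0 := by exact_mod_cast h1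
  have hb' : ((DA 0 1 1 l : ℝ) : ℂ) = ((DA 1 0 1 l : ℝ) : ℂ) := by exact_mod_cast hb
  have hc' : ((DA 0 0 1 l : ℝ) : ℂ) = ((DA 1 0 0 l : ℝ) : ℂ) := by exact_mod_cast hc
  have hi : Complex.I * Complex.I = -1 := Complex.I_mul_I
  push_cast
  linear_combination (1/8 : ℂ) * h0' - (Complex.I/8) * h1' - (1/4 : ℂ) * hb'
    - (Complex.I/4) * hc' - (((DA 1 0 1 l : ℝ) : ℂ)/4) * hi
end
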